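/- Let v be a vector in ℝ^m with m > 1. Then there exists a subset A ⊆ {1, …, m} with comparable coordinates, i.e. |v(i)| ≤ 2|v(j)| for all i, j ∈ A, and with big energy: ‖v|_A‖₂ ≥ ‖v‖₂ / (2.5 √(log₂ m)). -/

import Mathlib

/-!
Put `M = ‖v‖₂`, which bounds every `|v i|`, and split the coordinates into the dyadic shells
`A_k = {i | M / 2 ^ (k + 1) < |v i| ≤ M / 2 ^ k}`; inside a shell coordinates are comparable.
For `K = ⌈log₂ m⌉` the coordinates below `M / 2 ^ K` carry energy at most
`m M² / 4 ^ K ≤ M² / m ≤ ‖v‖₂² / 2`, so the shells `A_0, …, A_{K-1}` carry at least half of the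
energy and one of them carries `‖v‖₂² / (2K)`. Finally `2K < 2 (log₂ m + 1) ≤ 4 log₂ m`.
-/

/-- The Euclidean (ℓ2) norm of a finitely-indexed real vector. -/
noncomputable def l2 {ι : Type*} [Fintype ι] (v : ι → ℝ) : ℝ :=
  Real.sqrt (∑ i, (v i) ^ 2)

/-- The restriction of a vector to a set of coordinates (zero elsewhere). -/
def restr {m : ℕ} (A : Finset (Fin m)) (v : Fin m → ℝ) : Fin m → ℝ :=
  fun i => if i ∈ A then v i else 0

open Finset Function

section DyadicShell

variable {ι : Type*} [Fintype ι]

noncomputable def dyadicShell (v : ι → ℝ) (M : ℝ) (k : ℕ) : Finset ι :=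
  univ.filter fun i => M / 2 ^ (k + 1) < |v i| ∧ |v i| ≤ M / 2 ^ k

variable {v : ι → ℝ} {M : ℝ}

@[simp]
theorem mem_dyadicShell {k : ℕ} {i : ι} :
    i ∈ dyadicShell v M k ↔ M / 2 ^ (k + 1) < |v i| ∧ |v i| ≤ M / 2 ^ k := by
  simp [dyadicShell]

theorem abs_le_two_mul_abs_of_mem_dyadicShell {k : ℕ} {i j : ι}
    (hi : i ∈ dyadicShell v M k) (hj : j ∈ dyadicShell v M k) : |v i| ≤ 2 * |v j| := by
  rw [mem_dyadicShell] at hi hj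
  calc |v i| ≤ M / 2 ^ k := hi.2
    _ = 2 * (M / 2 ^ (k + 1)) := by rw [pow_succ]; field_simp
    _ ≤ 2 * |v j| := by linarith [hj.1]

theorem pairwise_disjoint_dyadicShell (hM : 0 ≤ M) :
    Pairwise (Disjoint on (dyadicShell v M)) := by
  intro a b hab
  wlog hlt : a < b generalizing a b
  · exact (this hab.symm (hab.lt_or_gt.resolve_left hlt)).symm
  refine Finset.disjoint_left.mpr fun i hia hib => ?_
  rw [mem_dyadicShell] at hia hib
  have : M / 2 ^ b ≤ M / 2 ^ (a + 1) :=
    div_le_div_of_nonneg_left hM (by positivity) (pow_le_pow_right₀ one_le_two hlt)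
  linarith [hia.1, hib.2]

theorem exists_lt_mem_dyadicShell {i : ι} (hi : |v i| ≤ M) :
    ∀ K : ℕ, M / 2 ^ K < |v i| → ∃ k < K, i ∈ dyadicShell v M k
  | 0, h => absurd hi (by simpa using h)
  | K + 1, h => by
    by_cases hK : M / 2 ^ K < |v i|
    · obtain ⟨k, hk, hik⟩ := exists_lt_mem_dyadicShell hi K hK
      exact ⟨k, by omega, hik⟩
    · exact ⟨K, K.lt_succ_self, mem_dyadicShell.mpr ⟨h, not_lt.mp hK⟩⟩

theorem sum_sq_le_card_mul_add_sum_dyadicShell (hM : 0 ≤ M) (hv : ∀ i, |v i| ≤ M) (K : ℕ) :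
    ∑ i, v i ^ 2 ≤
      Fintype.card ι * (M / 2 ^ K) ^ 2 + ∑ k ∈ range K, ∑ i ∈ dyadicShell v M k, v i ^ 2 := by
  classical
  rw [← sum_filter_add_sum_filter_not univ (fun i => |v i| ≤ M / 2 ^ K)]
  gcongr
  · calc ∑ i ∈ univ.filter (fun i => |v i| ≤ M / 2 ^ K), v i ^ 2
        ≤ #(univ.filter fun i => |v i| ≤ M / 2 ^ K) • (M / 2 ^ K) ^ 2 := by
          refine sum_le_card_nsmul _ _ _ fun i hi => ?_
          rw [← sq_abs]
          exact pow_le_pow_left₀ (abs_nonneg _) (mem_filter.mp hi).2 2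
      _ ≤ Fintype.card ι * (M / 2 ^ K) ^ 2 := by
          rw [nsmul_eq_mul]
          gcongr
          exact card_filter_le _ _
  · rw [← sum_biUnion ((pairwise_disjoint_dyadicShell hM).set_pairwise _)]
    refine sum_le_sum_of_subset_of_nonneg (fun i hi => ?_) fun _ _ _ => sq_nonneg _
    obtain ⟨k, hk, hik⟩ := exists_lt_mem_dyadicShell (hv i) K (not_le.mp (mem_filter.mp hi).2)
    exact mem_biUnion.mpr ⟨k, mem_range.mpr hk, hik⟩

end DyadicShell

theorem l2_sq {ι : Type*} [Fintype ι] (v : ι → ℝ) : l2 v ^ 2 = ∑ i, v i ^ 2 :=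
  Real.sq_sqrt (sum_nonneg fun i _ => sq_nonneg (v i))

theorem l2_nonneg {ι : Type*} [Fintype ι] (v : ι → ℝ) : 0 ≤ l2 v :=
  Real.sqrt_nonneg _

theorem abs_le_l2 {ι : Type*} [Fintype ι] (v : ι → ℝ) (i : ι) : |v i| ≤ l2 v :=
  Real.abs_le_sqrt (single_le_sum (fun j _ => sq_nonneg (v j)) (mem_univ i))

theorem l2_restr {m : ℕ} (A : Finset (Fin m)) (v : Fin m → ℝ) :
    l2 (restr A v) = Real.sqrt (∑ i ∈ A, v i ^ 2) := by
  simp only [l2, restr, ite_pow, ne_eq, OfNat.ofNat_ne_zero, not_false_eq_true, zero_pow,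
    sum_ite_mem, univ_inter]

theorem natCast_mul_div_two_pow_clog_sq_le {m : ℕ} (hm : 1 < m) (M : ℝ) :
    (m : ℝ) * (M / 2 ^ Nat.clog 2 m) ^ 2 ≤ M ^ 2 / 2 := by
  have hm2 : (2 : ℝ) ≤ m := by exact_mod_cast hm
  have hmK : (m : ℝ) ≤ 2 ^ Nat.clog 2 m := by exact_mod_cast Nat.le_pow_clog one_lt_two m
  rw [div_pow, mul_div_assoc', div_le_div_iff₀ (by positivity) two_pos]
  have : 2 * (m : ℝ) ≤ (2 ^ Nat.clog 2 m) ^ 2 := by nlinarith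
  nlinarith [sq_nonneg M]

theorem clog_le_two_mul_logb {m : ℕ} (hm : 1 < m) :
    (Nat.clog 2 m : ℝ) ≤ 2 * Real.logb 2 m := by
  have hL : 1 ≤ Real.logb 2 m := by
    rw [Real.le_logb_iff_rpow_le one_lt_two (by positivity), Real.rpow_one]
    exact_mod_cast hm
  have hceil := Real.natCeil_logb_natCast 2 m
  push_cast at hceil
  have := Nat.ceil_lt_add_one (zero_le_one.trans hL)
  rw [hceil] at this
  linarith

theorem sqrt_two_mul_clog_le {m : ℕ} (hm : 1 < m) :
    Real.sqrt (2 * Nat.clog 2 m) ≤ 2.5 * Real.sqrt (Real.logb 2 m) := by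
  have hK := clog_le_two_mul_logb hm
  have hL : 0 ≤ Real.logb 2 m := by linarith [(Nat.clog 2 m).cast_nonneg (α := ℝ)]
  rw [Real.sqrt_le_iff, mul_pow, Real.sq_sqrt hL]
  constructor <;> nlinarith [Real.sqrt_nonneg (Real.logb 2 m)]

/-- **Regularization.** For `v ∈ ℝ^m`, `m > 1`, there is a subset `A`
with comparable coordinates (`|v i| ≤ 2 |v j|` for `i, j ∈ A`) carrying big energy:
`‖v|_A‖₂ ≥ ‖v‖₂ / (2.5 √(log₂ m))`. -/
theorem stmt1 (m : ℕ) (hm : 1 < m) (v : Fin m → ℝ) :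
    ∃ A : Finset (Fin m),
      (∀ i ∈ A, ∀ j ∈ A, |v i| ≤ 2 * |v j|) ∧
      l2 v / (2.5 * Real.sqrt (Real.logb 2 m)) ≤ l2 (restr A v) := by
  set K := Nat.clog 2 m
  set E : ℕ → ℝ := fun k => ∑ i ∈ dyadicShell v (l2 v) k, v i ^ 2
  have hK : (0 : ℝ) < K := by exact_mod_cast Nat.clog_pos one_lt_two hm
  have hshells : l2 v ^ 2 / 2 ≤ ∑ k ∈ range K, E k := by
    have := sum_sq_le_card_mul_add_sum_dyadicShell (l2_nonneg v) (abs_le_l2 v) K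
    rw [← l2_sq, Fintype.card_fin] at this
    linarith [natCast_mul_div_two_pow_clog_sq_le hm (l2 v)]
  obtain ⟨k, -, hk⟩ : ∃ k ∈ range K, l2 v ^ 2 / (2 * K) ≤ E k := by
    refine exists_le_of_sum_le (nonempty_range_iff.mpr (Nat.clog_pos one_lt_two hm).ne') ?_
    rw [sum_const, card_range, nsmul_eq_mul]
    rwa [show (K : ℝ) * (l2 v ^ 2 / (2 * K)) = l2 v ^ 2 / 2 by field_simp]
  refine ⟨dyadicShell v (l2 v) k,
    fun i hi j hj => abs_le_two_mul_abs_of_mem_dyadicShell hi hj, ?_⟩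
  calc l2 v / (2.5 * Real.sqrt (Real.logb 2 m))
      ≤ l2 v / Real.sqrt (2 * K) :=
        div_le_div_of_nonneg_left (Real.sqrt_nonneg _) (by positivity) (sqrt_two_mul_clog_le hm)
    _ = Real.sqrt (l2 v ^ 2 / (2 * K)) := by
        rw [Real.sqrt_div' _ (by positivity), Real.sqrt_sq (l2_nonneg v)]
    _ ≤ l2 (restr _ v) := (l2_restr _ v).symm ▸ Real.sqrt_le_sqrt hk
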